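/- arXiv:1203.4422 — 2 statements merged into one kernel-verified Lean document; each statement's English description precedes it below -/
import Mathlib

section
/- For every F ∈ 𝓕, the C-optimal estimator ρ_C is the ν-a.e. unique element ρ of C satisfying the orthogonality condition ∫ ρ(x₁,x₂)ᵀ(φ(x₁)+ψ(x₂)) dν(x₁,x₂) = ∫ φ_A(x₁)ᵀφ(x₁) dν + ∫ ψ_B(x₂)ᵀψ(x₂) dν for all φ ∈ A and all ψ ∈ B; in particular this characterization involves only φ_A, ψ_B and ν. -/
open MeasureTheory

section Helpers
variable {α : Type*} [MeasurableSpace α] {μ : Measure α}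
variable {E : Type*} [NormedAddCommGroup E] [InnerProductSpace ℝ E]

lemma integrable_inner_of_memL2 {f g : α → E} (hf : MemLp f 2 μ) (hg : MemLp g 2 μ) :
    Integrable (fun x => (inner ℝ (f x) (g x) : ℝ)) μ := by
  have h := L2.integrable_inner (𝕜 := ℝ) (hf.toLp f) (hg.toLp g)
  refine h.congr ?_
  filter_upwards [hf.coeFn_toLp, hg.coeFn_toLp] with x h1 h2
  rw [h1, h2]

lemma integrable_sq_norm_of_memL2 {f : α → E} (hf : MemLp f 2 μ) :
    Integrable (fun x => ‖f x‖ ^ 2) μ := by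
  have := integrable_inner_of_memL2 hf hf
  simpa [real_inner_self_eq_norm_sq] using this

lemma quad_coeff_zero {a b c : ℝ} (hb : 0 ≤ b)
    (h : ∀ t : ℝ, a ≤ a - 2 * t * c + t ^ 2 * b) : c = 0 := by
  by_cases hb0 : b = 0
  · have h1 := h 1
    have h2 := h (-1)
    rw [hb0] at h1 h2
    linarith
  · have h1 := h (c / b)
    have e1 : c / b * b = c := div_mul_cancel₀ c hb0
    have e2 : (c / b) ^ 2 * b = (c / b) * c := by rw [sq, mul_assoc, e1]
    have h2 : (c / b) * c ≤ 0 := by nlinarith [h1]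
    have h4 : (c / b) ^ 2 * b = 0 :=
      le_antisymm (e2.symm ▸ h2) (mul_nonneg (sq_nonneg _) hb)
    have h5 : c / b = 0 := by
      rcases mul_eq_zero.1 h4 with h | h
      · exact pow_eq_zero_iff two_ne_zero |>.1 h
      · exact absurd h hb0
    rw [← e1, h5, zero_mul]

/-- If `∫‖u‖²` minimizes `∫‖u - t•g‖²` over all `t`, then `∫⟪u,g⟫ = 0`. -/
lemma orth_of_min {u g : α → E} (hu : MemLp u 2 μ) (hg : MemLp g 2 μ)
    (hmin : ∀ t : ℝ, ∫ x, ‖u x‖ ^ 2 ∂μ ≤ ∫ x, ‖u x - t • g x‖ ^ 2 ∂μ) :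
    ∫ x, (inner ℝ (u x) (g x) : ℝ) ∂μ = 0 := by
  set a := ∫ x, ‖u x‖ ^ 2 ∂μ
  set b := ∫ x, ‖g x‖ ^ 2 ∂μ
  set c := ∫ x, (inner ℝ (u x) (g x) : ℝ) ∂μ
  have hb : 0 ≤ b := integral_nonneg fun x => sq_nonneg _
  apply quad_coeff_zero (a := a) hb
  intro t
  have hexp : ∫ x, ‖u x - t • g x‖ ^ 2 ∂μ = a - 2 * t * c + t ^ 2 * b := by
    have h1 : ∀ x, ‖u x - t • g x‖ ^ 2
        = ‖u x‖ ^ 2 - 2 * t * (inner ℝ (u x) (g x) : ℝ) + t ^ 2 * ‖g x‖ ^ 2 := by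
      intro x
      rw [norm_sub_sq_real, real_inner_smul_right, norm_smul, mul_pow, Real.norm_eq_abs,
        sq_abs]
      ring
    simp_rw [h1]
    rw [integral_add, integral_sub]
    · rw [integral_const_mul, integral_const_mul]
    · exact integrable_sq_norm_of_memL2 hu
    · exact ((integrable_inner_of_memL2 hu hg).const_mul _)
    · exact (((integrable_sq_norm_of_memL2 hu).sub
        ((integrable_inner_of_memL2 hu hg).const_mul _)))
    · exact ((integrable_sq_norm_of_memL2 hg).const_mul _)
  have := hmin t
  rwa [hexp] at this

end Helpers


noncomputable section

abbrev Euc (k : ℕ) : Type := EuclideanSpace ℝ (Fin k)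

abbrev XSp (M₁ M₂ : ℕ) : Type := Euc M₁ × Euc M₂

abbrev ΩSp (M₁ M₂ N : ℕ) : Type := XSp M₁ M₂ × Euc N

/-- Mean square error of a (multi-domain) estimator `ρ` under joint law `F` of `((X₁,X₂),Y)`. -/
def MSE {M₁ M₂ N : ℕ} (F : Measure (ΩSp M₁ M₂ N)) (ρ : XSp M₁ M₂ → Euc N) : ℝ :=
  ∫ ω, ‖ω.2 - ρ ω.1‖ ^ 2 ∂F

/-- The class `C = A + B` of estimators `(x₁,x₂) ↦ φ(x₁) + ψ(x₂)`, `φ ∈ A`, `ψ ∈ B`. -/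
def Cset {M₁ M₂ N : ℕ} (A : Submodule ℝ (Euc M₁ → Euc N)) (B : Submodule ℝ (Euc M₂ → Euc N)) :
    Set (XSp M₁ M₂ → Euc N) :=
  {ρ | ∃ φ ∈ A, ∃ ψ ∈ B, ρ = fun x => φ x.1 + ψ x.2}

/-- The family `𝓕` of joint distributions consistent with the partial knowledge
`(ν, φ_A, ψ_B, c)`. -/
def SetF {M₁ M₂ N : ℕ} (ν : Measure (XSp M₁ M₂))
    (A : Submodule ℝ (Euc M₁ → Euc N)) (B : Submodule ℝ (Euc M₂ → Euc N))
    (φA : Euc M₁ → Euc N) (ψB : Euc M₂ → Euc N) (c : ℝ) :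
    Set (Measure (ΩSp M₁ M₂ N)) :=
  {F | IsProbabilityMeasure F ∧ F.map Prod.fst = ν ∧
    MemLp (fun ω : ΩSp M₁ M₂ N => ω.2) 2 F ∧
    (∀ φ ∈ A, MSE F (fun x => φA x.1) ≤ MSE F (fun x => φ x.1)) ∧
    (∀ ψ ∈ B, MSE F (fun x => ψB x.2) ≤ MSE F (fun x => ψ x.2)) ∧
    ∫ ω, ‖ω.2‖ ^ 2 ∂F = c}

/-- The σ-algebra generated by `(X₁,X₂)` on the sample space. -/
def sigmaX (M₁ M₂ N : ℕ) : MeasurableSpace (ΩSp M₁ M₂ N) :=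
  MeasurableSpace.comap Prod.fst inferInstance

/-- The σ-algebra generated by `X₁` on the sample space. -/
def sigmaX1 (M₁ M₂ N : ℕ) : MeasurableSpace (ΩSp M₁ M₂ N) :=
  MeasurableSpace.comap (fun ω => ω.1.1) inferInstance

/-- The σ-algebra generated by `X₁` on the `(X₁,X₂)`-space. -/
def sigmaX1' (M₁ M₂ : ℕ) : MeasurableSpace (XSp M₁ M₂) :=
  MeasurableSpace.comap Prod.fst inferInstance

/-- Multi-domain regret of `ρ(X₁,X₂)`: its MSE minus that of `E_F[Y | X₁,X₂]`. -/
def REG {M₁ M₂ N : ℕ} (F : Measure (ΩSp M₁ M₂ N)) (ρ : XSp M₁ M₂ → Euc N) : ℝ :=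
  MSE F ρ - ∫ ω, ‖ω.2 - condExp (sigmaX M₁ M₂ N) F (fun ω' => ω'.2) ω‖ ^ 2 ∂F

/-- Mean square error of a single-domain estimator `ρ(X₁)`. -/
def MSE1 {M₁ M₂ N : ℕ} (F : Measure (ΩSp M₁ M₂ N)) (ρ : Euc M₁ → Euc N) : ℝ :=
  ∫ ω, ‖ω.2 - ρ ω.1.1‖ ^ 2 ∂F

/-- Single-domain regret of `ρ(X₁)`: its MSE minus that of `E_F[Y | X₁]`. -/
def REG1 {M₁ M₂ N : ℕ} (F : Measure (ΩSp M₁ M₂ N)) (ρ : Euc M₁ → Euc N) : ℝ :=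
  MSE1 F ρ - ∫ ω, ‖ω.2 - condExp (sigmaX1 M₁ M₂ N) F (fun ω' => ω'.2) ω‖ ^ 2 ∂F
/-- The orthogonality condition characterizing the `C`-optimal estimator: it involves
only `φ_A`, `ψ_B` and `ν`. -/
def orthCond {M₁ M₂ N : ℕ} (ν : Measure (XSp M₁ M₂))
    (A : Submodule ℝ (Euc M₁ → Euc N)) (B : Submodule ℝ (Euc M₂ → Euc N))
    (φA : Euc M₁ → Euc N) (ψB : Euc M₂ → Euc N) (ρ : XSp M₁ M₂ → Euc N) : Prop :=
  ∀ φ ∈ A, ∀ ψ ∈ B,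
    ∫ x, (inner ℝ (ρ x) (φ x.1 + ψ x.2) : ℝ) ∂ν =
      (∫ x, (inner ℝ (φA x.1) (φ x.1) : ℝ) ∂ν) + ∫ x, (inner ℝ (ψB x.2) (ψ x.2) : ℝ) ∂ν

/-- for every `F ∈ 𝓕`, the `C`-optimal estimator `ρ_C` is the `ν`-a.e.
unique element of `C` satisfying the orthogonality condition
`∫ ρᵀ(φ(x₁)+ψ(x₂)) dν = ∫ φ_Aᵀφ dν + ∫ ψ_Bᵀψ dν` for all `φ ∈ A`, `ψ ∈ B`. -/
theorem stmt_1
    (M₁ M₂ N : ℕ) (hM₁ : 0 < M₁) (hM₂ : 0 < M₂) (hN : 0 < N)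
    (ν : Measure (XSp M₁ M₂)) (hνp : IsProbabilityMeasure ν)
    (hνmom : MemLp (id : XSp M₁ M₂ → XSp M₁ M₂) 2 ν)
    (A : Submodule ℝ (Euc M₁ → Euc N)) (B : Submodule ℝ (Euc M₂ → Euc N))
    (hAmeas : ∀ φ ∈ A, Measurable φ) (hBmeas : ∀ ψ ∈ B, Measurable ψ)
    (hAL2 : ∀ φ ∈ A, MemLp φ 2 (ν.map Prod.fst))
    (hBL2 : ∀ ψ ∈ B, MemLp ψ 2 (ν.map Prod.snd))
    (φA : Euc M₁ → Euc N) (ψB : Euc M₂ → Euc N) (hφA : φA ∈ A) (hψB : ψB ∈ B)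
    (c : ℝ) (hc : 0 < c)
    (hne : (SetF ν A B φA ψB c).Nonempty)
    (F : Measure (ΩSp M₁ M₂ N)) (hF : F ∈ SetF ν A B φA ψB c)
    (ρC : XSp M₁ M₂ → Euc N) (hρCmem : ρC ∈ Cset A B)
    (hρCmin : ∀ ρ ∈ Cset A B, MSE F ρC ≤ MSE F ρ) :
    orthCond ν A B φA ψB ρC ∧
      ∀ ρ ∈ Cset A B, orthCond ν A B φA ψB ρ → ρ =ᵐ[ν] ρC := by
  obtain ⟨hFp, hFmap, hY, hAmin, hBmin, -⟩ := hF
  haveI := hFp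
  -- L² membership over ν
  have hA2ν : ∀ φ ∈ A, MemLp (fun x : XSp M₁ M₂ => φ x.1) 2 ν := fun φ hφ =>
    (memLp_map_measure_iff (hAmeas φ hφ).aestronglyMeasurable
      measurable_fst.aemeasurable).1 (hAL2 φ hφ)
  have hB2ν : ∀ ψ ∈ B, MemLp (fun x : XSp M₁ M₂ => ψ x.2) 2 ν := fun ψ hψ =>
    (memLp_map_measure_iff (hBmeas ψ hψ).aestronglyMeasurable
      measurable_snd.aemeasurable).1 (hBL2 ψ hψ)
  -- L² membership over F
  have pull2 : ∀ g : XSp M₁ M₂ → Euc N, Measurable g → MemLp g 2 ν →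
      MemLp (fun ω : ΩSp M₁ M₂ N => g ω.1) 2 F := by
    intro g hgm hg
    rw [← hFmap] at hg
    exact (memLp_map_measure_iff hgm.aestronglyMeasurable
      measurable_fst.aemeasurable).1 hg
  have hA2F : ∀ φ ∈ A, MemLp (fun ω : ΩSp M₁ M₂ N => φ ω.1.1) 2 F := fun φ hφ =>
    pull2 _ ((hAmeas φ hφ).comp measurable_fst) (hA2ν φ hφ)
  have hB2F : ∀ ψ ∈ B, MemLp (fun ω : ΩSp M₁ M₂ N => ψ ω.1.2) 2 F := fun ψ hψ =>
    pull2 _ ((hBmeas ψ hψ).comp measurable_snd) (hB2ν ψ hψ)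
  -- transfer integrals over F to ν
  have pullI : ∀ f : XSp M₁ M₂ → ℝ, AEStronglyMeasurable f ν →
      ∫ ω, f ω.1 ∂F = ∫ x, f x ∂ν := by
    intro f hf
    rw [← hFmap] at hf ⊢
    exact (integral_map measurable_fst.aemeasurable hf).symm
  -- orthogonality over A
  have eqA : ∀ φ ∈ A, ∫ ω, (inner ℝ ω.2 (φ ω.1.1) : ℝ) ∂F
      = ∫ x, (inner ℝ (φA x.1) (φ x.1) : ℝ) ∂ν := by
    intro φ hφ
    have h0 : ∫ ω, (inner ℝ (ω.2 - φA ω.1.1) (φ ω.1.1) : ℝ) ∂F = 0 := by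
      apply orth_of_min (hY.sub (hA2F φA hφA)) (hA2F φ hφ)
      intro t
      have hmem : φA + t • φ ∈ A := A.add_mem hφA (A.smul_mem t hφ)
      have h := hAmin _ hmem
      simpa [MSE, Pi.add_apply, Pi.smul_apply, sub_add_eq_sub_sub] using h
    have hi1 : Integrable (fun ω : ΩSp M₁ M₂ N => (inner ℝ ω.2 (φ ω.1.1) : ℝ)) F :=
      integrable_inner_of_memL2 hY (hA2F φ hφ)
    have hi2 : Integrable (fun ω : ΩSp M₁ M₂ N => (inner ℝ (φA ω.1.1) (φ ω.1.1) : ℝ)) F :=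
      integrable_inner_of_memL2 (hA2F φA hφA) (hA2F φ hφ)
    have h1 : ∫ ω, ((inner ℝ ω.2 (φ ω.1.1) : ℝ) - (inner ℝ (φA ω.1.1) (φ ω.1.1) : ℝ)) ∂F = 0 := by
      simpa [inner_sub_left] using h0
    rw [integral_sub hi1 hi2, sub_eq_zero] at h1
    rw [h1]
    exact pullI _ (Measurable.inner ((hAmeas φA hφA).comp measurable_fst)
      ((hAmeas φ hφ).comp measurable_fst)).aestronglyMeasurable
  -- orthogonality over B
  have eqB : ∀ ψ ∈ B, ∫ ω, (inner ℝ ω.2 (ψ ω.1.2) : ℝ) ∂F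
      = ∫ x, (inner ℝ (ψB x.2) (ψ x.2) : ℝ) ∂ν := by
    intro ψ hψ
    have h0 : ∫ ω, (inner ℝ (ω.2 - ψB ω.1.2) (ψ ω.1.2) : ℝ) ∂F = 0 := by
      apply orth_of_min (hY.sub (hB2F ψB hψB)) (hB2F ψ hψ)
      intro t
      have hmem : ψB + t • ψ ∈ B := B.add_mem hψB (B.smul_mem t hψ)
      have h := hBmin _ hmem
      simpa [MSE, Pi.add_apply, Pi.smul_apply, sub_add_eq_sub_sub] using h
    have hi1 : Integrable (fun ω : ΩSp M₁ M₂ N => (inner ℝ ω.2 (ψ ω.1.2) : ℝ)) F :=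
      integrable_inner_of_memL2 hY (hB2F ψ hψ)
    have hi2 : Integrable (fun ω : ΩSp M₁ M₂ N => (inner ℝ (ψB ω.1.2) (ψ ω.1.2) : ℝ)) F :=
      integrable_inner_of_memL2 (hB2F ψB hψB) (hB2F ψ hψ)
    have h1 : ∫ ω, ((inner ℝ ω.2 (ψ ω.1.2) : ℝ) - (inner ℝ (ψB ω.1.2) (ψ ω.1.2) : ℝ)) ∂F = 0 := by
      simpa [inner_sub_left] using h0
    rw [integral_sub hi1 hi2, sub_eq_zero] at h1
    rw [h1]
    exact pullI _ (Measurable.inner ((hBmeas ψB hψB).comp measurable_snd)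
      ((hBmeas ψ hψ).comp measurable_snd)).aestronglyMeasurable
  -- data of ρC
  obtain ⟨φ0, hφ0, ψ0, hψ0, hρC⟩ := hρCmem
  have hρCmeas : Measurable ρC := by
    rw [hρC]
    exact ((hAmeas φ0 hφ0).comp measurable_fst).add ((hBmeas ψ0 hψ0).comp measurable_snd)
  have hρC2ν : MemLp ρC 2 ν := by
    rw [hρC]; exact (hA2ν φ0 hφ0).add (hB2ν ψ0 hψ0)
  have hρC2F : MemLp (fun ω : ΩSp M₁ M₂ N => ρC ω.1) 2 F := pull2 _ hρCmeas hρC2ν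
  -- orthogonality over C for ρC
  have eqC : ∀ φ ∈ A, ∀ ψ ∈ B,
      ∫ ω, (inner ℝ ω.2 (φ ω.1.1 + ψ ω.1.2) : ℝ) ∂F
        = ∫ x, (inner ℝ (ρC x) (φ x.1 + ψ x.2) : ℝ) ∂ν := by
    intro φ hφ ψ hψ
    have hg2F : MemLp (fun ω : ΩSp M₁ M₂ N => φ ω.1.1 + ψ ω.1.2) 2 F :=
      (hA2F φ hφ).add (hB2F ψ hψ)
    have h0 : ∫ ω, (inner ℝ (ω.2 - ρC ω.1) (φ ω.1.1 + ψ ω.1.2) : ℝ) ∂F = 0 := by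
      apply orth_of_min (hY.sub hρC2F) hg2F
      intro t
      have hmem : (fun x : XSp M₁ M₂ => (φ0 + t • φ) x.1 + (ψ0 + t • ψ) x.2) ∈ Cset A B :=
        ⟨φ0 + t • φ, A.add_mem hφ0 (A.smul_mem t hφ),
         ψ0 + t • ψ, B.add_mem hψ0 (B.smul_mem t hψ), rfl⟩
      have h := hρCmin _ hmem
      have he : ∀ ω : ΩSp M₁ M₂ N,
          ω.2 - ((φ0 + t • φ) ω.1.1 + (ψ0 + t • ψ) ω.1.2)
            = (ω.2 - ρC ω.1) - t • (φ ω.1.1 + ψ ω.1.2) := by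
        intro ω
        simp only [Pi.add_apply, Pi.smul_apply, hρC, smul_add]
        abel
      simp only [MSE] at h
      simp_rw [he] at h
      exact h
    have hi1 : Integrable (fun ω : ΩSp M₁ M₂ N => (inner ℝ ω.2 (φ ω.1.1 + ψ ω.1.2) : ℝ)) F :=
      integrable_inner_of_memL2 hY hg2F
    have hi2 : Integrable
        (fun ω : ΩSp M₁ M₂ N => (inner ℝ (ρC ω.1) (φ ω.1.1 + ψ ω.1.2) : ℝ)) F :=
      integrable_inner_of_memL2 hρC2F hg2F
    have h1 : ∫ ω, ((inner ℝ ω.2 (φ ω.1.1 + ψ ω.1.2) : ℝ)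
        - (inner ℝ (ρC ω.1) (φ ω.1.1 + ψ ω.1.2) : ℝ)) ∂F = 0 := by
      simpa [inner_sub_left] using h0
    rw [integral_sub hi1 hi2, sub_eq_zero] at h1
    rw [h1]
    exact pullI (fun x => (inner ℝ (ρC x) (φ x.1 + ψ x.2) : ℝ))
      (Measurable.inner hρCmeas (((hAmeas φ hφ).comp measurable_fst).add
        ((hBmeas ψ hψ).comp measurable_snd))).aestronglyMeasurable
  -- part 1 : orthCond for ρC
  have hOrth : orthCond ν A B φA ψB ρC := by
    intro φ hφ ψ hψ
    rw [← eqC φ hφ ψ hψ, ← eqA φ hφ, ← eqB ψ hψ]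
    have hi1 : Integrable (fun ω : ΩSp M₁ M₂ N => (inner ℝ ω.2 (φ ω.1.1) : ℝ)) F :=
      integrable_inner_of_memL2 hY (hA2F φ hφ)
    have hi2 : Integrable (fun ω : ΩSp M₁ M₂ N => (inner ℝ ω.2 (ψ ω.1.2) : ℝ)) F :=
      integrable_inner_of_memL2 hY (hB2F ψ hψ)
    rw [← integral_add hi1 hi2]
    simp_rw [← inner_add_right]
  refine ⟨hOrth, ?_⟩
  -- uniqueness
  intro ρ hρmem hρorth
  obtain ⟨φ1, hφ1, ψ1, hψ1, hρ⟩ := hρmem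
  set φd : Euc M₁ → Euc N := φ1 - φ0 with hφd
  set ψd : Euc M₂ → Euc N := ψ1 - ψ0 with hψd
  have hφdA : φd ∈ A := A.sub_mem hφ1 hφ0
  have hψdB : ψd ∈ B := B.sub_mem hψ1 hψ0
  set θ : XSp M₁ M₂ → Euc N := fun x => φd x.1 + ψd x.2 with hθ
  have hθ2ν : MemLp θ 2 ν := (hA2ν φd hφdA).add (hB2ν ψd hψdB)
  have hρ2ν : MemLp ρ 2 ν := by
    rw [hρ]; exact (hA2ν φ1 hφ1).add (hB2ν ψ1 hψ1)
  have hdiff : ∀ x, ρ x - ρC x = θ x := by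
    intro x
    simp only [hρ, hρC, hθ, hφd, hψd, Pi.sub_apply]
    abel
  have h1 := hρorth φd hφdA ψd hψdB
  have h2 := hOrth φd hφdA ψd hψdB
  have h3 : ∫ x, (inner ℝ (ρ x) (θ x) : ℝ) ∂ν = ∫ x, (inner ℝ (ρC x) (θ x) : ℝ) ∂ν := by
    rw [hθ] at *
    rw [h1, h2]
  have h4 : ∫ x, (inner ℝ (ρ x - ρC x) (θ x) : ℝ) ∂ν = 0 := by
    have hi1 : Integrable (fun x => (inner ℝ (ρ x) (θ x) : ℝ)) ν :=
      integrable_inner_of_memL2 hρ2ν hθ2ν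
    have hi2 : Integrable (fun x => (inner ℝ (ρC x) (θ x) : ℝ)) ν :=
      integrable_inner_of_memL2 hρC2ν hθ2ν
    simp_rw [inner_sub_left]
    rw [integral_sub hi1 hi2, h3, sub_self]
  have h5 : ∫ x, ‖θ x‖ ^ 2 ∂ν = 0 := by
    rw [← h4]
    congr 1
    ext x
    rw [hdiff x, real_inner_self_eq_norm_sq]
  have h6 : (fun x => ‖θ x‖ ^ 2) =ᵐ[ν] 0 := by
    have hint : Integrable (fun x => ‖θ x‖ ^ 2) ν := integrable_sq_norm_of_memL2 hθ2ν
    exact (integral_eq_zero_iff_of_nonneg (fun x => sq_nonneg _) hint).1 h5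
  filter_upwards [h6] with x hx
  have : ‖θ x‖ ^ 2 = 0 := hx
  have hθ0 : θ x = 0 := by
    have := pow_eq_zero_iff (n := 2) two_ne_zero |>.1 this
    exact norm_eq_zero.1 this
  have := hdiff x
  rw [hθ0] at this
  exact sub_eq_zero.1 this
end
end

section
/- For every F ∈ 𝓕, the mean square error of the C-optimal estimator satisfies the Pythagorean identity MSE(F,ρ_C) = E_F‖Y‖² − E_F‖ρ_C(X₁,X₂)‖² = c − ∫‖ρ_C(x₁,x₂)‖² dν(x₁,x₂); consequently the value MSE(F,ρ_C) is the same for every F ∈ 𝓕 (claim 2 of Theorem 1). -/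
open MeasureTheory

noncomputable section

lemma aux_integrable_inner {α : Type*} [MeasurableSpace α] {μ : Measure α}
    {E : Type*} [NormedAddCommGroup E] [InnerProductSpace ℝ E]
    {f g : α → E} (hf : MemLp f 2 μ) (hg : MemLp g 2 μ) :
    Integrable (fun x => (inner ℝ (f x) (g x) : ℝ)) μ := by
  have h := L2.integrable_inner (𝕜 := ℝ) (hf.toLp f) (hg.toLp g)
  refine h.congr ?_
  filter_upwards [hf.coeFn_toLp, hg.coeFn_toLp] with x h1 h2
  rw [h1, h2]

lemma aux_expand {α : Type*} [MeasurableSpace α] {μ : Measure α}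
    {E : Type*} [NormedAddCommGroup E] [InnerProductSpace ℝ E]
    {f g : α → E} (hf : MemLp f 2 μ) (hg : MemLp g 2 μ) :
    ∫ x, ‖f x - g x‖ ^ 2 ∂μ =
      (∫ x, ‖f x‖ ^ 2 ∂μ) - 2 * (∫ x, (inner ℝ (f x) (g x) : ℝ) ∂μ) + ∫ x, ‖g x‖ ^ 2 ∂μ := by
  have h1 : Integrable (fun x => ‖f x‖ ^ 2) μ := hf.norm.integrable_sq
  have h2 : Integrable (fun x => ‖g x‖ ^ 2) μ := hg.norm.integrable_sq
  have h3 : Integrable (fun x => (2:ℝ) * (inner ℝ (f x) (g x) : ℝ)) μ :=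
    (aux_integrable_inner hf hg).const_mul 2
  calc ∫ x, ‖f x - g x‖ ^ 2 ∂μ
      = ∫ x, (‖f x‖ ^ 2 - 2 * (inner ℝ (f x) (g x) : ℝ) + ‖g x‖ ^ 2) ∂μ := by
        congr 1; funext x; exact norm_sub_sq_real _ _
    _ = (∫ x, (‖f x‖ ^ 2 - 2 * (inner ℝ (f x) (g x) : ℝ)) ∂μ) + ∫ x, ‖g x‖ ^ 2 ∂μ :=
        integral_add (h1.sub h3) h2
    _ = (∫ x, ‖f x‖ ^ 2 ∂μ) - (∫ x, (2:ℝ) * (inner ℝ (f x) (g x) : ℝ) ∂μ) + ∫ x, ‖g x‖ ^ 2 ∂μ := by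
        rw [integral_sub h1 h3]
    _ = _ := by rw [integral_const_mul]

lemma aux_quad (a b : ℝ) (ha : 0 ≤ a) (h : ∀ t : ℝ, 0 ≤ a * t ^ 2 - 2 * b * t) : b = 0 := by
  rcases eq_or_lt_of_le ha with h0 | h0
  · have h1 := h 1
    have h2 := h (-1)
    rw [← h0] at h1 h2
    nlinarith
  · have h1 := h (b / a)
    have haa : a ≠ 0 := ne_of_gt h0
    rw [div_pow] at h1
    have h2 : a * (b ^ 2 / a ^ 2) = b ^ 2 / a := by field_simp
    rw [h2] at h1
    have h3 : 2 * b * (b / a) = 2 * b ^ 2 / a := by field_simp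
    rw [h3] at h1
    have h6 : 2 * b ^ 2 / a = 2 * (b ^ 2 / a) := by ring
    rw [h6] at h1
    have h4 : b ^ 2 / a ≤ 0 := by linarith
    have h5 : b ^ 2 ≤ 0 := by
      by_contra hb
      push_neg at hb
      exact absurd h4 (not_le.mpr (div_pos hb h0))
    have := sq_nonneg b
    have : b ^ 2 = 0 := le_antisymm h5 (sq_nonneg b)
    exact pow_eq_zero_iff (by norm_num) |>.mp this

/-- Theorem 1, claim 2: for every `F ∈ 𝓕` one has the Pythagorean identity
`MSE(F,ρ_C) = E_F‖Y‖² − E_ν‖ρ_C‖² = c − ∫‖ρ_C‖² dν`; in particular this value is the same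
for every `F ∈ 𝓕`. -/
theorem stmt_2
    (M₁ M₂ N : ℕ) (hM₁ : 0 < M₁) (hM₂ : 0 < M₂) (hN : 0 < N)
    (ν : Measure (XSp M₁ M₂)) (hνp : IsProbabilityMeasure ν)
    (hνmom : MemLp (id : XSp M₁ M₂ → XSp M₁ M₂) 2 ν)
    (A : Submodule ℝ (Euc M₁ → Euc N)) (B : Submodule ℝ (Euc M₂ → Euc N))
    (hAmeas : ∀ φ ∈ A, Measurable φ) (hBmeas : ∀ ψ ∈ B, Measurable ψ)
    (hAL2 : ∀ φ ∈ A, MemLp φ 2 (ν.map Prod.fst))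
    (hBL2 : ∀ ψ ∈ B, MemLp ψ 2 (ν.map Prod.snd))
    (φA : Euc M₁ → Euc N) (ψB : Euc M₂ → Euc N) (hφA : φA ∈ A) (hψB : ψB ∈ B)
    (c : ℝ) (hc : 0 < c)
    (hne : (SetF ν A B φA ψB c).Nonempty)
    (ρC : XSp M₁ M₂ → Euc N) (hρCmem : ρC ∈ Cset A B)
    (hρCmin : ∀ F ∈ SetF ν A B φA ψB c, ∀ ρ ∈ Cset A B, MSE F ρC ≤ MSE F ρ) :
    ∀ F ∈ SetF ν A B φA ψB c,
      MSE F ρC = (∫ ω, ‖ω.2‖ ^ 2 ∂F) - ∫ x, ‖ρC x‖ ^ 2 ∂ν ∧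
      MSE F ρC = c - ∫ x, ‖ρC x‖ ^ 2 ∂ν := by
  
  intro F hF
  obtain ⟨hFp, hmarg, hY2, -, -, hc2⟩ := id hF
  obtain ⟨φ, hφ, ψ, hψ, rfl⟩ := hρCmem
  have hν : ν = F.map Prod.fst := hmarg.symm
  have hφm : Measurable φ := hAmeas φ hφ
  have hψm : Measurable ψ := hBmeas ψ hψ
  have hρm : Measurable (fun x : XSp M₁ M₂ => φ x.1 + ψ x.2) :=
    (hφm.comp measurable_fst).add (hψm.comp measurable_snd)
  have hmap1 : ν.map Prod.fst = F.map (fun ω : ΩSp M₁ M₂ N => ω.1.1) := by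
    rw [hν, Measure.map_map measurable_fst measurable_fst]; rfl
  have hmap2 : ν.map Prod.snd = F.map (fun ω : ΩSp M₁ M₂ N => ω.1.2) := by
    rw [hν, Measure.map_map measurable_snd measurable_fst]; rfl
  have hφF : MemLp (fun ω : ΩSp M₁ M₂ N => φ ω.1.1) 2 F := by
    have h := hAL2 φ hφ
    rw [hmap1] at h
    exact h.comp_of_map (measurable_fst.comp measurable_fst).aemeasurable
  have hψF : MemLp (fun ω : ΩSp M₁ M₂ N => ψ ω.1.2) 2 F := by
    have h := hBL2 ψ hψ
    rw [hmap2] at h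
    exact h.comp_of_map (measurable_snd.comp measurable_fst).aemeasurable
  have hρF : MemLp (fun ω : ΩSp M₁ M₂ N => φ ω.1.1 + ψ ω.1.2) 2 F := hφF.add hψF
  set a : ℝ := ∫ ω : ΩSp M₁ M₂ N, ‖φ ω.1.1 + ψ ω.1.2‖ ^ 2 ∂F with ha_def
  set b : ℝ := ∫ ω : ΩSp M₁ M₂ N,
      (inner ℝ (ω.2 - (φ ω.1.1 + ψ ω.1.2)) (φ ω.1.1 + ψ ω.1.2) : ℝ) ∂F with hb_def
  have hfL2 : MemLp (fun ω : ΩSp M₁ M₂ N => ω.2 - (φ ω.1.1 + ψ ω.1.2)) 2 F := hY2.sub hρF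
  have ha : 0 ≤ a := integral_nonneg fun ω => sq_nonneg _
  have hkey : ∀ t : ℝ, 0 ≤ a * t ^ 2 - 2 * b * t := by
    intro t
    have hmem : (fun x : XSp M₁ M₂ => ((1 + t) • φ) x.1 + ((1 + t) • ψ) x.2) ∈ Cset A B :=
      ⟨(1 + t) • φ, A.smul_mem _ hφ, (1 + t) • ψ, B.smul_mem _ hψ, rfl⟩
    have hle := hρCmin F hF _ hmem
    have hexp : MSE F (fun x : XSp M₁ M₂ => ((1 + t) • φ) x.1 + ((1 + t) • ψ) x.2)
        = MSE F (fun x : XSp M₁ M₂ => φ x.1 + ψ x.2) - 2 * (t * b) + t ^ 2 * a := by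
      have e1 : MSE F (fun x : XSp M₁ M₂ => ((1 + t) • φ) x.1 + ((1 + t) • ψ) x.2)
          = ∫ ω : ΩSp M₁ M₂ N,
              ‖(ω.2 - (φ ω.1.1 + ψ ω.1.2)) - t • (φ ω.1.1 + ψ ω.1.2)‖ ^ 2 ∂F := by
        unfold MSE
        congr 1
        funext ω
        congr 1
        simp only [Pi.smul_apply, add_smul, one_smul, smul_add]
        abel
      have hg : MemLp (fun ω : ΩSp M₁ M₂ N => t • (φ ω.1.1 + ψ ω.1.2)) 2 F := hρF.const_smul t
      rw [e1, aux_expand hfL2 hg]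
      have e2 : (∫ ω : ΩSp M₁ M₂ N,
          (inner ℝ (ω.2 - (φ ω.1.1 + ψ ω.1.2)) (t • (φ ω.1.1 + ψ ω.1.2)) : ℝ) ∂F) = t * b := by
        simp_rw [inner_smul_right]
        rw [integral_const_mul]
      have e3 : (∫ ω : ΩSp M₁ M₂ N, ‖t • (φ ω.1.1 + ψ ω.1.2)‖ ^ 2 ∂F) = t ^ 2 * a := by
        simp_rw [norm_smul, Real.norm_eq_abs, mul_pow, sq_abs]
        rw [integral_const_mul]
      rw [e2, e3]
      rfl
    rw [hexp] at hle
    nlinarith [hle]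
  have hb0 : b = 0 := aux_quad a b ha hkey
  have hinner : (∫ ω : ΩSp M₁ M₂ N, (inner ℝ ω.2 (φ ω.1.1 + ψ ω.1.2) : ℝ) ∂F) = a := by
    have hsplit : b = (∫ ω : ΩSp M₁ M₂ N, (inner ℝ ω.2 (φ ω.1.1 + ψ ω.1.2) : ℝ) ∂F) - a := by
      rw [hb_def]
      have : ∀ ω : ΩSp M₁ M₂ N,
          (inner ℝ (ω.2 - (φ ω.1.1 + ψ ω.1.2)) (φ ω.1.1 + ψ ω.1.2) : ℝ)
          = (inner ℝ ω.2 (φ ω.1.1 + ψ ω.1.2) : ℝ) - ‖φ ω.1.1 + ψ ω.1.2‖ ^ 2 := by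
        intro ω
        rw [inner_sub_left, real_inner_self_eq_norm_sq]
      simp_rw [this]
      rw [integral_sub (aux_integrable_inner hY2 hρF) hρF.norm.integrable_sq]
    rw [hsplit] at hb0
    linarith
  have hMSE : MSE F (fun x : XSp M₁ M₂ => φ x.1 + ψ x.2)
      = (∫ ω : ΩSp M₁ M₂ N, ‖ω.2‖ ^ 2 ∂F) - a := by
    have e0 : MSE F (fun x : XSp M₁ M₂ => φ x.1 + ψ x.2)
        = ∫ ω : ΩSp M₁ M₂ N, ‖ω.2 - (φ ω.1.1 + ψ ω.1.2)‖ ^ 2 ∂F := rfl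
    rw [e0, aux_expand hY2 hρF, hinner]
    ring
  have haν : a = ∫ x, ‖φ x.1 + ψ x.2‖ ^ 2 ∂ν := by
    rw [ha_def, hν, integral_map measurable_fst.aemeasurable
      ((hρm.norm.pow_const 2).aestronglyMeasurable)]
  constructor
  · rw [hMSE, haν]
  · rw [hMSE, haν, hc2]
end
end
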